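/- Let M = V_1 ⊕ ... ⊕ V_n be a finite direct sum of virtually simple left R-modules. If N is an essential submodule of M, then M embeds into N. -/
import Mathlib


def VirtuallySimple (R : Type*) [Ring R] (M : Type*) [AddCommGroup M] [Module R M] : Prop :=
  Nontrivial M ∧ ∀ N : Submodule R M, N ≠ ⊥ → Nonempty (N ≃ₗ[R] M)

/-- If `M` is a finite direct sum of virtually simple submodules and `N ≤ M` is
essential, then `M` embeds into `N`. -/
theorem stmt9 (R : Type*) [Ring R] (M : Type*) [AddCommGroup M] [Module R M]
    (n : ℕ) (V : Fin n → Submodule R M) (hind : iSupIndep V) (hsup : iSup V = ⊤)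
    (hvs : ∀ i, VirtuallySimple R (V i))
    (N : Submodule R M) (hess : ∀ K : Submodule R M, K ≠ ⊥ → N ⊓ K ≠ ⊥) :
    ∃ f : M →ₗ[R] N, Function.Injective f := by
  classical
  have internal : DirectSum.IsInternal V :=
    DirectSum.isInternal_submodule_of_iSupIndep_of_iSup_eq_top hind hsup
  set eqv : M ≃ₗ[R] DirectSum (Fin n) fun i => ↥(V i) :=
    (LinearEquiv.ofBijective (DirectSum.coeLinearMap V) internal).symm with heqv
  -- each V i is nonzero
  have hVne : ∀ i, V i ≠ ⊥ := by
    intro i h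
    have := (hvs i).1
    rw [h] at this
    exact not_nontrivial _ this
  -- W i : the submodule of V i corresponding to N ⊓ V i
  set W : ∀ i, Submodule R (V i) := fun i => N.comap (V i).subtype with hW
  have hWne : ∀ i, W i ≠ ⊥ := by
    intro i h
    apply hess (V i) (hVne i)
    rw [eq_bot_iff]
    rintro x ⟨hxN, hxV⟩
    have : (⟨x, hxV⟩ : V i) ∈ W i := hxN
    rw [h] at this
    simpa using congrArg Subtype.val this
  have e : ∀ i, (W i ≃ₗ[R] V i) := fun i => ((hvs i).2 (W i) (hWne i)).some
  set g : ∀ i, V i →ₗ[R] V i := fun i => (W i).subtype ∘ₗ ((e i).symm : V i →ₗ[R] W i)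
    with hg
  have hginj : ∀ i, Function.Injective (g i) := fun i =>
    (W i).injective_subtype.comp (e i).symm.injective
  have hgmem : ∀ i (x : V i), ((g i x : V i) : M) ∈ N := by
    intro i x
    exact ((e i).symm x).2
  set G : (DirectSum (Fin n) fun i => ↥(V i)) →ₗ[R] DirectSum (Fin n) fun i => ↥(V i) := DFinsupp.mapRange.linearMap g with hG
  have hGinj : Function.Injective G := by
    intro x y h
    refine DFinsupp.ext fun i => ?_
    have := congrArg (fun z => z i) h
    simp only [hG, DFinsupp.mapRange.linearMap_apply, DFinsupp.mapRange_apply] at this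
    exact hginj i this
  set F : M →ₗ[R] M := (DirectSum.coeLinearMap V) ∘ₗ G ∘ₗ (eqv : M →ₗ[R] DirectSum (Fin n) fun i => ↥(V i)) with hF
  have hFinj : Function.Injective F := by
    simp only [hF, LinearMap.coe_comp, LinearEquiv.coe_coe]
    exact internal.injective.comp (hGinj.comp eqv.injective)
  have hFmem : ∀ m, F m ∈ N := by
    intro m
    show DirectSum.coeLinearMap V (G (eqv m)) ∈ N
    induction eqv m using DirectSum.induction_on with
    | zero => simp
    | of i x =>
        have : G (DirectSum.of (fun i => V i) i x) = DirectSum.of (fun i => V i) i (g i x) := by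
          exact DFinsupp.mapRange_single (hf := fun i => (g i).map_zero)
        rw [this, DirectSum.coeLinearMap_of]
        exact hgmem i x
    | add x y hx hy =>
        rw [map_add, map_add]
        exact N.add_mem hx hy
  exact ⟨F.codRestrict N hFmem, fun a b h => hFinj (congrArg Subtype.val h)⟩
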